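/- arXiv:2411.07919 — 5 statements merged into one kernel-verified Lean document; each statement's English description precedes it below -/
import Mathlib

section
/- Let A be a real n×n matrix, B a real n×m matrix, x_v ∈ ℝⁿ. Let ψ : ℝⁿ → ℝ be nonnegative with ψ(x_v) = 0 and |ψ(a) − ψ(b)| ≤ β‖a − b‖ for all a, b ∈ ℝⁿ, where β > 0. Let Q be a symmetric positive definite n×n matrix with smallest eigenvalue q satisfying q ≤ β². Let x ∈ ℝⁿ and u*⁰, u*^Σ, û ∈ ℝᵐ with ‖û − u*^Σ‖ ≤ Σ and ‖u*^Σ − u*⁰‖ ≤ φΣ, where Σ ≥ 0, φ ≥ 0. Suppose the exact successor state x° = Ax + Bu*⁰ satisfies ψ(x°)² ≤ ψ(x)² − (x − x_v)ᵀQ(x − x_v). Then the suboptimal successor state x₊ = Ax + Bû satisfies ψ(x₊) ≤ (1 − α₁)ψ(x) + ζ₁Σ, where α₁ = 1 − √(1 − q/β²) and ζ₁ = ‖B‖ β (φ + 1). -/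
/-- The operator norm (largest singular value) of a real matrix, viewed as a linear
map between Euclidean spaces. -/
noncomputable def matOpNorm {n m : ℕ} (B : Matrix (Fin n) (Fin m) ℝ) : ℝ :=
  ‖LinearMap.toContinuousLinearMap (Matrix.toEuclideanLin B)‖

open scoped Matrix

/-- Rayleigh-type lower bound: `q‖v‖² ≤ vᵀQv` when `q` is below every eigenvalue. -/
lemma rayleigh_lb {n : ℕ} (Q : Matrix (Fin n) (Fin n) ℝ) (hQ : Q.IsHermitian)
    (q : ℝ) (hq : ∀ i, q ≤ hQ.eigenvalues i) (v : Fin n → ℝ) :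
    q * dotProduct v v ≤ dotProduct v (Q.mulVec v) := by
  classical
  set U : Matrix (Fin n) (Fin n) ℝ := (Matrix.IsHermitian.eigenvectorUnitary hQ :
    Matrix (Fin n) (Fin n) ℝ) with hUdef
  have hstar : star U = Uᵀ := by
    ext i j
    simp [Matrix.star_eq_conjTranspose, Matrix.conjTranspose_apply]
  have hU : U * Uᵀ = 1 := by
    rw [← hstar]
    exact Matrix.mem_unitaryGroup_iff.mp (Matrix.IsHermitian.eigenvectorUnitary hQ).2
  set w : Fin n → ℝ := Uᵀ *ᵥ v with hwdef
  have hww : dotProduct w w = dotProduct v v := by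
    have : dotProduct w w = dotProduct v ((U * Uᵀ) *ᵥ v) := by
      rw [hwdef, Matrix.mulVec_transpose, ← Matrix.mulVec_mulVec,
        Matrix.dotProduct_mulVec, Matrix.mulVec_transpose]
    rw [this, hU, Matrix.one_mulVec]
  have hspec := Matrix.IsHermitian.spectral_theorem hQ
  have hQv : dotProduct v (Q.mulVec v)
      = ∑ i, hQ.eigenvalues i * w i ^ 2 := by
    have hD : (Matrix.diagonal (RCLike.ofReal ∘ hQ.eigenvalues) : Matrix (Fin n) (Fin n) ℝ)
        = Matrix.diagonal hQ.eigenvalues := by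
      congr 1
    calc dotProduct v (Q.mulVec v)
        = dotProduct v ((U * Matrix.diagonal hQ.eigenvalues * Uᵀ) *ᵥ v) := by
          rw [← hD, ← hstar]; exact congrArg (fun M => dotProduct v (M *ᵥ v)) hspec
      _ = dotProduct w (Matrix.diagonal hQ.eigenvalues *ᵥ w) := by
          rw [Matrix.mul_assoc, ← Matrix.mulVec_mulVec, ← Matrix.mulVec_mulVec,
            Matrix.dotProduct_mulVec, ← Matrix.mulVec_transpose, ← hwdef]
      _ = ∑ i, hQ.eigenvalues i * w i ^ 2 := by
          simp [dotProduct, Matrix.mulVec_diagonal]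
          congr 1; ext i; ring
  have hsum : q * dotProduct w w ≤ ∑ i, hQ.eigenvalues i * w i ^ 2 := by
    have : dotProduct w w = ∑ i, w i ^ 2 := by
      simp [dotProduct]; congr 1; ext i; ring
    rw [this, Finset.mul_sum]
    exact Finset.sum_le_sum fun i _ =>
      mul_le_mul_of_nonneg_right (hq i) (sq_nonneg _)
  rw [hQv, ← hww]
  exact hsum

/-- Inequality (28) of Lemma 1: if the exact successor state
`x° = Ax + Bu*⁰` satisfies the value decrease `ψ(x°)² ≤ ψ(x)² − (x−x_v)ᵀQ(x−x_v)`,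
then the suboptimal successor `xplus = Ax + Bû` satisfies
`ψ(xplus) ≤ (1 − α₁)ψ(x) + ζ₁Σ` with `α₁ = 1 − √(1 − q/β²)`, `ζ₁ = ‖B‖β(φ+1)`. -/
theorem stmt_2 (n m : ℕ)
    (A : Matrix (Fin n) (Fin n) ℝ) (B : Matrix (Fin n) (Fin m) ℝ)
    (x_v : EuclideanSpace ℝ (Fin n))
    (ψ : EuclideanSpace ℝ (Fin n) → ℝ) (hψ0 : ∀ a, 0 ≤ ψ a) (hψv : ψ x_v = 0)
    (β : ℝ) (hβ : 0 < β)
    (hlip : ∀ a b : EuclideanSpace ℝ (Fin n), |ψ a - ψ b| ≤ β * ‖a - b‖)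
    (Q : Matrix (Fin n) (Fin n) ℝ) (hQpd : Q.PosDef)
    (q : ℝ) (hq : IsLeast (Set.range hQpd.1.eigenvalues) q) (hqβ : q ≤ β ^ 2)
    (x : EuclideanSpace ℝ (Fin n)) (ustar0 ustarS uhat : EuclideanSpace ℝ (Fin m))
    (σ φ : ℝ) (hσ : 0 ≤ σ) (hφ : 0 ≤ φ)
    (h1 : ‖uhat - ustarS‖ ≤ σ) (h2 : ‖ustarS - ustar0‖ ≤ φ * σ)
    (hdec : ψ (Matrix.toEuclideanLin A x + Matrix.toEuclideanLin B ustar0) ^ 2 ≤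
      ψ x ^ 2 - dotProduct (WithLp.ofLp (x - x_v)) (Q.mulVec (WithLp.ofLp (x - x_v))))
    (α₁ ζ₁ : ℝ)
    (hα₁ : α₁ = 1 - Real.sqrt (1 - q / β ^ 2))
    (hζ₁ : ζ₁ = matOpNorm B * β * (φ + 1)) :
    ψ (Matrix.toEuclideanLin A x + Matrix.toEuclideanLin B uhat) ≤
      (1 - α₁) * ψ x + ζ₁ * σ := by
  classical
  set x₀ := Matrix.toEuclideanLin A x + Matrix.toEuclideanLin B ustar0 with hx₀
  set xplus := Matrix.toEuclideanLin A x + Matrix.toEuclideanLin B uhat with hxplus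
  -- q is positive
  obtain ⟨⟨i, hi⟩, hlb⟩ := hq
  have hq0 : 0 < q := hi ▸ hQpd.eigenvalues_pos i
  have hlb' : ∀ j, q ≤ hQpd.1.eigenvalues j := fun j => hlb ⟨j, rfl⟩
  -- ψ x ≤ β ‖x - x_v‖
  have hψx : ψ x ≤ β * ‖x - x_v‖ := by
    have := hlip x x_v
    rw [hψv, sub_zero] at this
    exact (le_abs_self _).trans this
  -- quadratic form bound
  have hnorm : dotProduct (WithLp.ofLp (x - x_v)) (WithLp.ofLp (x - x_v)) = ‖x - x_v‖ ^ 2 := by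
    rw [EuclideanSpace.norm_eq, Real.sq_sqrt (by positivity)]
    simp [dotProduct, Real.norm_eq_abs, sq_abs]
    congr 1; ext i; ring
  have hrq : q * ‖x - x_v‖ ^ 2 ≤ dotProduct (WithLp.ofLp (x - x_v)) (Q.mulVec (WithLp.ofLp (x - x_v))) := by
    rw [← hnorm]; exact rayleigh_lb Q hQpd.1 q hlb' _
  -- ψ x₀ ^ 2 ≤ (1 - q/β²) * ψ x ^ 2
  have hβ2 : (0:ℝ) < β ^ 2 := by positivity
  have hfac : 0 ≤ 1 - q / β ^ 2 := by
    rw [sub_nonneg, div_le_one hβ2]; exact hqβ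
  have hψx2 : q / β ^ 2 * ψ x ^ 2 ≤ q * ‖x - x_v‖ ^ 2 := by
    have h1 : ψ x ^ 2 ≤ β ^ 2 * ‖x - x_v‖ ^ 2 := by
      have := mul_self_le_mul_self (hψ0 x) hψx
      calc ψ x ^ 2 = ψ x * ψ x := sq ..
        _ ≤ (β * ‖x - x_v‖) * (β * ‖x - x_v‖) := this
        _ = β ^ 2 * ‖x - x_v‖ ^ 2 := by ring
    calc q / β ^ 2 * ψ x ^ 2 ≤ q / β ^ 2 * (β ^ 2 * ‖x - x_v‖ ^ 2) :=
          mul_le_mul_of_nonneg_left h1 (by positivity)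
      _ = q * ‖x - x_v‖ ^ 2 := by field_simp
  have hsq : ψ x₀ ^ 2 ≤ (1 - q / β ^ 2) * ψ x ^ 2 := by
    nlinarith [hdec, hrq, hψx2]
  -- ψ x₀ ≤ √(1 - q/β²) ψ x
  have hψ₀ : ψ x₀ ≤ Real.sqrt (1 - q / β ^ 2) * ψ x := by
    have h := Real.sqrt_le_sqrt hsq
    rw [Real.sqrt_sq (hψ0 x₀), Real.sqrt_mul hfac, Real.sqrt_sq (hψ0 x)] at h
    exact h
  -- suboptimality bound
  have hdiff : xplus - x₀ = Matrix.toEuclideanLin B (uhat - ustar0) := by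
    rw [hxplus, hx₀, map_sub]; abel
  have hBnorm : ‖Matrix.toEuclideanLin B (uhat - ustar0)‖ ≤
      matOpNorm B * ‖uhat - ustar0‖ := by
    have := (LinearMap.toContinuousLinearMap (Matrix.toEuclideanLin B)).le_opNorm
      (uhat - ustar0)
    simpa [matOpNorm] using this
  have hu : ‖uhat - ustar0‖ ≤ (φ + 1) * σ := by
    calc ‖uhat - ustar0‖ = ‖(uhat - ustarS) + (ustarS - ustar0)‖ := by abel_nf
      _ ≤ ‖uhat - ustarS‖ + ‖ustarS - ustar0‖ := norm_add_le _ _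
      _ ≤ σ + φ * σ := add_le_add h1 h2
      _ = (φ + 1) * σ := by ring
  have hopn : 0 ≤ matOpNorm B := norm_nonneg _
  have hlast : ψ xplus ≤ ψ x₀ + β * (matOpNorm B * ((φ + 1) * σ)) := by
    have hl := hlip xplus x₀
    have h3 : ψ xplus - ψ x₀ ≤ β * ‖xplus - x₀‖ := (le_abs_self _).trans hl
    have h4 : ‖xplus - x₀‖ ≤ matOpNorm B * ((φ + 1) * σ) := by
      rw [hdiff]
      exact hBnorm.trans (mul_le_mul_of_nonneg_left hu hopn)
    have h5 := mul_le_mul_of_nonneg_left h4 hβ.le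
    linarith
  calc ψ xplus ≤ ψ x₀ + β * (matOpNorm B * ((φ + 1) * σ)) := hlast
    _ ≤ Real.sqrt (1 - q / β ^ 2) * ψ x + β * (matOpNorm B * ((φ + 1) * σ)) := by
        linarith
    _ = (1 - α₁) * ψ x + ζ₁ * σ := by rw [hα₁, hζ₁]; ring
end

section
/- Let A be a real n×n matrix, B a real n×m matrix, x, x_v ∈ ℝⁿ and u*, u_v, û, u*^Σ ∈ ℝᵐ with (A − I)x_v + B u_v = 0, ‖û − u*^Σ‖ ≤ Σ and ‖u*^Σ − u*‖ ≤ φΣ for Σ ≥ 0, φ ≥ 0. Suppose h > 0 and ψ ≥ 0 satisfy h(‖x − x_v‖² + ‖u* − u_v‖²) ≤ ψ². Let 0 < π₁ < 1 and 0 < π₂ < 1, and define the updated tightening parameter Σ₊ = π₁Σ + π₂‖(Ax + Bû) − x‖. Then Σ₊ ≤ (1 − α₂)Σ + ζ₂ψ, where α₂ = 1 − (π₁ + π₂‖B‖(φ + 1)) and ζ₂ = π₂(‖A − I‖ + ‖B‖)/√h. -/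
lemma matOpNorm_nonneg {n m : ℕ} (B : Matrix (Fin n) (Fin m) ℝ) : 0 ≤ matOpNorm B :=
  norm_nonneg _

lemma matOpNorm_apply_le {n m : ℕ} (B : Matrix (Fin n) (Fin m) ℝ)
    (v : EuclideanSpace ℝ (Fin m)) :
    ‖Matrix.toEuclideanLin B v‖ ≤ matOpNorm B * ‖v‖ :=
  (LinearMap.toContinuousLinearMap (Matrix.toEuclideanLin B)).le_opNorm v

lemma le_div_sqrt_of_mul_sq_le {a h ψ : ℝ} (hh : 0 < h) (hψ : 0 ≤ ψ) (H : h * a ^ 2 ≤ ψ ^ 2) :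
    a ≤ ψ / Real.sqrt h := by
  rw [le_div_iff₀ (Real.sqrt_pos.mpr hh)]
  refine (abs_le_of_sq_le_sq' ?_ hψ).2
  rwa [mul_pow, Real.sq_sqrt hh.le, mul_comm]

lemma LinearMap.apply_add_apply_sub_eq_of_equilibrium {R E F : Type*} [CommRing R]
    [AddCommGroup E] [Module R E] [AddCommGroup F] [Module R F]
    (f : E →ₗ[R] E) (g : F →ₗ[R] E) {x_v x : E} {u_v u : F} (heq : f x_v - x_v + g u_v = 0) :
    f x + g u - x = (f - 1) (x - x_v) + g (u - u_v) := by
  simp only [LinearMap.sub_apply, Module.End.one_apply, map_sub]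
  linear_combination (norm := abel) heq

lemma norm_toEuclideanLin_add_sub_le {n m : ℕ}
    (A : Matrix (Fin n) (Fin n) ℝ) (B : Matrix (Fin n) (Fin m) ℝ)
    {x x_v : EuclideanSpace ℝ (Fin n)} {u u_v : EuclideanSpace ℝ (Fin m)}
    (heq : Matrix.toEuclideanLin A x_v - x_v + Matrix.toEuclideanLin B u_v = 0) :
    ‖Matrix.toEuclideanLin A x + Matrix.toEuclideanLin B u - x‖ ≤
      matOpNorm (A - 1) * ‖x - x_v‖ + matOpNorm B * ‖u - u_v‖ := by
  have hA : Matrix.toEuclideanLin (A - 1) = Matrix.toEuclideanLin A - 1 := by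
    rw [map_sub, Matrix.toLpLin_one, Module.End.one_eq_id]
  rw [LinearMap.apply_add_apply_sub_eq_of_equilibrium _ _ heq, ← hA]
  exact (norm_add_le _ _).trans
    (add_le_add (matOpNorm_apply_le _ _) (matOpNorm_apply_le _ _))

theorem stmt_4_general (n m : ℕ)
    (A : Matrix (Fin n) (Fin n) ℝ) (B : Matrix (Fin n) (Fin m) ℝ)
    (x x_v : EuclideanSpace ℝ (Fin n)) (ustar u_v uhat ustarS : EuclideanSpace ℝ (Fin m))
    (heq : Matrix.toEuclideanLin A x_v - x_v + Matrix.toEuclideanLin B u_v = 0)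
    (σ φ : ℝ)
    (h1 : ‖uhat - ustarS‖ ≤ σ) (h2 : ‖ustarS - ustar‖ ≤ φ * σ)
    (h ψ : ℝ) (hh : 0 < h) (hψ : 0 ≤ ψ)
    (hbound : h * (‖x - x_v‖ ^ 2 + ‖ustar - u_v‖ ^ 2) ≤ ψ ^ 2)
    (π₁ π₂ : ℝ) (hπ₂ : 0 < π₂ ∧ π₂ < 1)
    (σplus α₂ ζ₂ : ℝ)
    (hσplus : σplus = π₁ * σ +
      π₂ * ‖(Matrix.toEuclideanLin A x + Matrix.toEuclideanLin B uhat) - x‖)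
    (hα₂ : α₂ = 1 - (π₁ + π₂ * matOpNorm B * (φ + 1)))
    (hζ₂ : ζ₂ = π₂ * (matOpNorm (A - 1) + matOpNorm B) / Real.sqrt h) :
    σplus ≤ (1 - α₂) * σ + ζ₂ * ψ := by
  have hx : ‖x - x_v‖ ≤ ψ / Real.sqrt h :=
    le_div_sqrt_of_mul_sq_le hh hψ (by nlinarith [sq_nonneg ‖ustar - u_v‖])
  have hu : ‖ustar - u_v‖ ≤ ψ / Real.sqrt h :=
    le_div_sqrt_of_mul_sq_le hh hψ (by nlinarith [sq_nonneg ‖x - x_v‖])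
  have hcontrol : ‖uhat - u_v‖ ≤ σ + φ * σ + ψ / Real.sqrt h :=
    calc ‖uhat - u_v‖ = ‖(uhat - ustarS) + (ustarS - ustar) + (ustar - u_v)‖ := by abel_nf
      _ ≤ ‖uhat - ustarS‖ + ‖ustarS - ustar‖ + ‖ustar - u_v‖ := norm_add₃_le
      _ ≤ σ + φ * σ + ψ / Real.sqrt h := by gcongr
  have hA_nonneg := matOpNorm_nonneg (A - 1)
  have hB_nonneg := matOpNorm_nonneg B
  calc σplus ≤ π₁ * σ + π₂ * (matOpNorm (A - 1) * (ψ / Real.sqrt h)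
        + matOpNorm B * (σ + φ * σ + ψ / Real.sqrt h)) := by
        rw [hσplus]
        gcongr π₁ * σ + π₂ * ?_
        · exact hπ₂.1.le
        exact (norm_toEuclideanLin_add_sub_le A B heq).trans (by gcongr)
    _ = (1 - α₂) * σ + ζ₂ * ψ := by rw [hα₂, hζ₂]; ring

/-- Inequality (29) of Lemma 1: with the constraint-tightening
update `Σ₊ = π₁Σ + π₂‖(Ax + Bû) − x‖` one has `Σ₊ ≤ (1 − α₂)Σ + ζ₂ψ`, where
`α₂ = 1 − (π₁ + π₂‖B‖(φ+1))` and `ζ₂ = π₂(‖A − I‖ + ‖B‖)/√h`. -/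
theorem stmt_4 (n m : ℕ)
    (A : Matrix (Fin n) (Fin n) ℝ) (B : Matrix (Fin n) (Fin m) ℝ)
    (x x_v : EuclideanSpace ℝ (Fin n)) (ustar u_v uhat ustarS : EuclideanSpace ℝ (Fin m))
    (heq : Matrix.toEuclideanLin A x_v - x_v + Matrix.toEuclideanLin B u_v = 0)
    (σ φ : ℝ) (hσ : 0 ≤ σ) (hφ : 0 ≤ φ)
    (h1 : ‖uhat - ustarS‖ ≤ σ) (h2 : ‖ustarS - ustar‖ ≤ φ * σ)
    (h ψ : ℝ) (hh : 0 < h) (hψ : 0 ≤ ψ)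
    (hbound : h * (‖x - x_v‖ ^ 2 + ‖ustar - u_v‖ ^ 2) ≤ ψ ^ 2)
    (π₁ π₂ : ℝ) (hπ₁ : 0 < π₁ ∧ π₁ < 1) (hπ₂ : 0 < π₂ ∧ π₂ < 1)
    (σplus α₂ ζ₂ : ℝ)
    (hσplus : σplus = π₁ * σ +
      π₂ * ‖(Matrix.toEuclideanLin A x + Matrix.toEuclideanLin B uhat) - x‖)
    (hα₂ : α₂ = 1 - (π₁ + π₂ * matOpNorm B * (φ + 1)))
    (hζ₂ : ζ₂ = π₂ * (matOpNorm (A - 1) + matOpNorm B) / Real.sqrt h) :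
    σplus ≤ (1 - α₂) * σ + ζ₂ * ψ :=
  stmt_4_general n m A B x x_v ustar u_v uhat ustarS heq σ φ h1 h2 h ψ hh hψ hbound π₁ π₂ hπ₂ σplus
    α₂ ζ₂ hσplus hα₂ hζ₂
end

section
/- Consider nonnegative real sequences (ψ_t)_{t≥0} and (Σ_t)_{t≥0} and constants α₁, α₂ ∈ (0,1), ζ₁, ζ₂ > 0 such that for all t: ψ_{t+1} ≤ (1 − α₁)ψ_t + ζ₁Σ_t and Σ_{t+1} ≤ (1 − α₂)Σ_t + ζ₂ψ_t. Assume the small-gain condition ζ₁ζ₂ < α₁α₂, and let c be any real number with ζ₁/α₂ < c < α₁/ζ₂ (such c exists). Then λ := max(1 − α₁ + cζ₂, 1 − α₂ + ζ₁/c) satisfies 0 ≤ λ < 1, and for all t, ψ_{t+1} + cΣ_{t+1} ≤ λ(ψ_t + cΣ_t). -/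
/-- Small-gain Lyapunov construction of Section 6.1.2: under the
small-gain condition `ζ₁ζ₂ < α₁α₂`, a weight `c` with `ζ₁/α₂ < c < α₁/ζ₂` exists,
and for any such `c` the constant `λ = max(1 − α₁ + cζ₂, 1 − α₂ + ζ₁/c)` satisfies
`0 ≤ λ < 1` and the weighted sum `ψ_t + cΣ_t` contracts: `ψ_{t+1} + cΣ_{t+1} ≤
λ(ψ_t + cΣ_t)`. -/
theorem stmt_6 (ψ σ : ℕ → ℝ) (hψ : ∀ t, 0 ≤ ψ t) (hσ : ∀ t, 0 ≤ σ t)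
    (α₁ α₂ ζ₁ ζ₂ : ℝ)
    (hα₁ : 0 < α₁ ∧ α₁ < 1) (hα₂ : 0 < α₂ ∧ α₂ < 1) (hζ₁ : 0 < ζ₁) (hζ₂ : 0 < ζ₂)
    (hrec1 : ∀ t, ψ (t + 1) ≤ (1 - α₁) * ψ t + ζ₁ * σ t)
    (hrec2 : ∀ t, σ (t + 1) ≤ (1 - α₂) * σ t + ζ₂ * ψ t)
    (hsg : ζ₁ * ζ₂ < α₁ * α₂)
    (c : ℝ) (hc : ζ₁ / α₂ < c ∧ c < α₁ / ζ₂) :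
    (∃ c' : ℝ, ζ₁ / α₂ < c' ∧ c' < α₁ / ζ₂) ∧
    0 ≤ max (1 - α₁ + c * ζ₂) (1 - α₂ + ζ₁ / c) ∧
    max (1 - α₁ + c * ζ₂) (1 - α₂ + ζ₁ / c) < 1 ∧
    ∀ t, ψ (t + 1) + c * σ (t + 1) ≤
      max (1 - α₁ + c * ζ₂) (1 - α₂ + ζ₁ / c) * (ψ t + c * σ t) := by
  obtain ⟨hα₁0, hα₁1⟩ := hα₁
  obtain ⟨hα₂0, hα₂1⟩ := hα₂
  obtain ⟨hc1, hc2⟩ := hc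
  have hc0 : 0 < c := lt_trans (div_pos hζ₁ hα₂0) hc1
  -- c * ζ₂ < α₁
  have hcz : c * ζ₂ < α₁ := (lt_div_iff₀ hζ₂).mp hc2
  -- ζ₁ / c < α₂
  have hzc : ζ₁ / c < α₂ := by
    rw [div_lt_iff₀ hc0]
    have := (div_lt_iff₀ hα₂0).mp hc1
    linarith
  have hl1 : 1 - α₁ + c * ζ₂ < 1 := by linarith
  have hl2 : 1 - α₂ + ζ₁ / c < 1 := by linarith
  have hl0 : 0 ≤ 1 - α₁ + c * ζ₂ := by nlinarith
  refine ⟨⟨c, hc1, hc2⟩, le_max_of_le_left hl0, max_lt hl1 hl2, fun t => ?_⟩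
  set lam := max (1 - α₁ + c * ζ₂) (1 - α₂ + ζ₁ / c) with hlam
  have h1 : ψ (t + 1) + c * σ (t + 1) ≤
      (1 - α₁ + c * ζ₂) * ψ t + (c * (1 - α₂) + ζ₁) * σ t := by
    have := hrec1 t
    have h2 := hrec2 t
    nlinarith [mul_le_mul_of_nonneg_left h2 hc0.le]
  have hA : (1 - α₁ + c * ζ₂) * ψ t ≤ lam * ψ t :=
    mul_le_mul_of_nonneg_right (le_max_left _ _) (hψ t)
  have hB : (c * (1 - α₂) + ζ₁) * σ t ≤ lam * (c * σ t) := by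
    have h3 : c * (1 - α₂) + ζ₁ = (1 - α₂ + ζ₁ / c) * c := by
      field_simp
    have h4 : (1 - α₂ + ζ₁ / c) * c ≤ lam * c :=
      mul_le_mul_of_nonneg_right (le_max_right _ _) hc0.le
    calc (c * (1 - α₂) + ζ₁) * σ t ≤ (lam * c) * σ t := by
          rw [h3]; exact mul_le_mul_of_nonneg_right h4 (hσ t)
      _ = lam * (c * σ t) := by ring
  calc ψ (t + 1) + c * σ (t + 1) ≤ (1 - α₁ + c * ζ₂) * ψ t + (c * (1 - α₂) + ζ₁) * σ t := h1
    _ ≤ lam * ψ t + lam * (c * σ t) := add_le_add hA hB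
    _ = lam * (ψ t + c * σ t) := by ring
end

section
/- Let α₁ ∈ (0,1), ζ₁ > 0, β > 0, d ≥ 1, α₂ > 0, ζ₂ > 0 satisfy α₁√d < 1 and ζ₁/α₁ ≤ α₂/ζ₂. Let 0 ≤ Σ′ < Σ, and define ε := (1/β)(ζ₁Σ/(α₁√d) − ζ₁Σ′), p := (βε + ζ₁Σ′)², and ψ̌ := √(d·p). Let ψ ≥ 0 satisfy ψ ≤ min(βε, (√d − 1)βε). Then: (i) ε > 0; (ii) ψ̌ = (ζ₁/α₁)Σ; (iii) βε + ψ + ζ₁Σ′ ≤ ψ̌; and (iv) (ζ₁/α₁)Σ ≤ ψ̌ ≤ (α₂/ζ₂)Σ. -/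
/-- The quantitative core of Theorem 1: with consecutive
tightening values `0 ≤ Σ′ < Σ`, step size `ε = (1/β)(ζ₁Σ/(α₁√d) − ζ₁Σ′)`,
terminal-set level `p = (βε + ζ₁Σ′)²` and `ψ̌ = √(dp)`, and with
`ψ ≤ min(βε, (√d − 1)βε)` (qualification Q1), one has (i) `ε > 0`,
(ii) `ψ̌ = (ζ₁/α₁)Σ`, (iii) `βε + ψ + ζ₁Σ′ ≤ ψ̌`, and
(iv) `(ζ₁/α₁)Σ ≤ ψ̌ ≤ (α₂/ζ₂)Σ`. -/
theorem stmt_11 (α₁ ζ₁ β d α₂ ζ₂ : ℝ)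
    (hα₁ : 0 < α₁ ∧ α₁ < 1) (hζ₁ : 0 < ζ₁) (hβ : 0 < β) (hd : 1 ≤ d)
    (hα₂ : 0 < α₂) (hζ₂ : 0 < ζ₂)
    (hsd : α₁ * Real.sqrt d < 1) (hratio : ζ₁ / α₁ ≤ α₂ / ζ₂)
    (σ' σ : ℝ) (hσ' : 0 ≤ σ') (hσσ : σ' < σ)
    (ε p ψc : ℝ)
    (hε : ε = (1 / β) * (ζ₁ * σ / (α₁ * Real.sqrt d) - ζ₁ * σ'))
    (hp : p = (β * ε + ζ₁ * σ') ^ 2)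
    (hψc : ψc = Real.sqrt (d * p))
    (ψ : ℝ) (hψ0 : 0 ≤ ψ) (hψ : ψ ≤ min (β * ε) ((Real.sqrt d - 1) * (β * ε))) :
    0 < ε ∧
    ψc = (ζ₁ / α₁) * σ ∧
    β * ε + ψ + ζ₁ * σ' ≤ ψc ∧
    ((ζ₁ / α₁) * σ ≤ ψc ∧ ψc ≤ (α₂ / ζ₂) * σ) := by
  obtain ⟨hα₁0, hα₁1⟩ := hα₁
  have hsd1 : 1 ≤ Real.sqrt d := by
    rw [show (1:ℝ) = Real.sqrt 1 by simp]
    exact Real.sqrt_le_sqrt hd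
  have hsdpos : 0 < Real.sqrt d := lt_of_lt_of_le one_pos hsd1
  have hasd : 0 < α₁ * Real.sqrt d := mul_pos hα₁0 hsdpos
  have hσpos : 0 < σ := lt_of_le_of_lt hσ' hσσ
  have hβε : β * ε = ζ₁ * σ / (α₁ * Real.sqrt d) - ζ₁ * σ' := by
    rw [hε]; field_simp
  have hkey : ζ₁ * σ' < ζ₁ * σ / (α₁ * Real.sqrt d) := by
    have h1 : ζ₁ * σ' < ζ₁ * σ := by nlinarith
    have h2 : ζ₁ * σ ≤ ζ₁ * σ / (α₁ * Real.sqrt d) := by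
      rw [le_div_iff₀ hasd]; nlinarith [mul_pos hζ₁ hσpos]
    linarith
  have hβεpos : 0 < β * ε := by rw [hβε]; linarith
  have hεpos : 0 < ε := by nlinarith
  have hsum : 0 ≤ β * ε + ζ₁ * σ' := by nlinarith
  have hsq : Real.sqrt d * Real.sqrt d = d := Real.mul_self_sqrt (by linarith)
  have hψceq : ψc = Real.sqrt d * (β * ε + ζ₁ * σ') := by
    rw [hψc, hp, Real.sqrt_mul (by linarith), Real.sqrt_sq hsum]
  have hψc2 : ψc = (ζ₁ / α₁) * σ := by
    rw [hψceq, hβε]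
    field_simp
    ring
  refine ⟨hεpos, hψc2, ?_, le_of_eq hψc2.symm, ?_⟩
  · have h2 := le_trans hψ (min_le_right _ _)
    rw [hψceq]; nlinarith [mul_nonneg (mul_nonneg (sub_nonneg.2 hsd1) hζ₁.le) hσ']
  · rw [hψc2]
    have := mul_le_mul_of_nonneg_right hratio (le_of_lt hσpos)
    linarith
end

section
/- Let P be a real symmetric positive definite n×n matrix with smallest eigenvalue λ_min(P) > 0, let K be a real m×n matrix, let x_v ∈ ℝⁿ, u_v ∈ ℝᵐ, and let x̄ ≥ 0, Σ ≥ 0. Set p := λ_min(P)·x̄². Let b̲ˣ, b̄ˣ ∈ ℝⁿ and b̲ᵘ, b̄ᵘ ∈ ℝᵐ be bounds such that, componentwise, Σ + x̄ ≤ b̄ˣ_k − (x_v)_k and Σ + x̄ ≤ (x_v)_k − b̲ˣ_k for all k, and Σ + ‖K‖x̄ ≤ b̄ᵘ_l − (u_v)_l and Σ + ‖K‖x̄ ≤ (u_v)_l − b̲ᵘ_l for all l, where ‖K‖ is the operator norm of K. Then every x ∈ ℝⁿ with (x − x_v)ᵀP(x − x_v) ≤ p satisfies: (i) ‖x − x_v‖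 ≤ x̄; (ii) b̲ˣ_k + Σ ≤ x_k ≤ b̄ˣ_k − Σ for all k; and (iii) the feedback control u = −K(x − x_v) + u_v satisfies b̲ᵘ_l + Σ ≤ u_l ≤ b̄ᵘ_l − Σ for all l. -/
open scoped RealInnerProductSpace

lemma coord_abs_le_norm {n : ℕ} (y : EuclideanSpace ℝ (Fin n)) (k : Fin n) :
    |y k| ≤ ‖y‖ := by
  rw [EuclideanSpace.norm_eq]
  rw [← Real.sqrt_sq_eq_abs]
  apply Real.sqrt_le_sqrt
  have : |y k| ^ 2 ≤ ∑ i, ‖y i‖ ^ 2 := by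
    refine Finset.single_le_sum (f := fun i => ‖y i‖ ^ 2) (fun i _ => by positivity)
      (Finset.mem_univ k) |>.trans_eq' ?_
    simp [sq_abs, Real.norm_eq_abs]
  simpa [sq_abs] using this

lemma quad_lower {n : ℕ} (P : Matrix (Fin n) (Fin n) ℝ) (hP : P.PosDef)
    (pmin : ℝ) (hpmin : ∀ i, pmin ≤ hP.1.eigenvalues i)
    (y : EuclideanSpace ℝ (Fin n)) :
    pmin * ‖y‖ ^ 2 ≤ dotProduct y.ofLp (P.mulVec y.ofLp) := by
  classical
  set b := hP.1.eigenvectorBasis with hb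
  set lam := hP.1.eigenvalues with hlam
  set T := Matrix.toEuclideanLin P with hT
  have hTby : ∀ i, ⟪b i, T y⟫ = lam i * ⟪b i, y⟫ := by
    intro i
    have hsymm : LinearMap.IsSymmetric T :=
      (Matrix.isHermitian_iff_isSymmetric).mp hP.1
    have hTb : T (b i) = lam i • (b i) := by
      ext j
      have := congrFun (hP.1.mulVec_eigenvectorBasis i) j
      simpa [hT, hb, hlam, Matrix.toEuclideanLin_apply] using this
    calc ⟪b i, T y⟫ = ⟪T (b i), y⟫ := (hsymm (b i) y).symm
    _ = lam i * ⟪b i, y⟫ := by rw [hTb, real_inner_smul_left]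
  have hdq : dotProduct y.ofLp (P.mulVec y.ofLp) = ⟪y, T y⟫ := by
    simp [hT, Matrix.toEuclideanLin_apply, PiLp.inner_apply, dotProduct, RCLike.inner_apply, mul_comm]
  have hexp : ⟪y, T y⟫ = ∑ i, lam i * ⟪b i, y⟫ ^ 2 := by
    rw [← OrthonormalBasis.sum_inner_mul_inner b y (T y)]
    congr 1; funext i
    rw [hTby i, real_inner_comm y (b i)]; ring
  have hnorm : ‖y‖ ^ 2 = ∑ i, ⟪b i, y⟫ ^ 2 := by
    have := OrthonormalBasis.sum_inner_mul_inner b y y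
    rw [real_inner_self_eq_norm_sq] at this
    rw [← this]
    congr 1; funext i
    rw [real_inner_comm y (b i)]; ring
  rw [hdq, hexp, hnorm, Finset.mul_sum]
  apply Finset.sum_le_sum
  intro i _
  exact mul_le_mul_of_nonneg_right (hpmin i) (sq_nonneg _)



/-- Correctness of step iii of the Online Procedure (the
terminal-set inclusion (23) for hyper-rectangle constraints): if the box bounds
satisfy `Σ + x̄ ≤ b̄ˣ − x_v`, `Σ + x̄ ≤ x_v − b̲ˣ` componentwise and
`Σ + ‖K‖x̄ ≤ b̄ᵘ − u_v`, `Σ + ‖K‖x̄ ≤ u_v − b̲ᵘ` componentwise, then every `x` in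
the ellipsoid `{(x − x_v)ᵀP(x − x_v) ≤ p}` with `p = λ_min(P)x̄²` satisfies
`‖x − x_v‖ ≤ x̄`, lies in the `Σ`-tightened state box, and the feedback control
`u = −K(x − x_v) + u_v` lies in the `Σ`-tightened control box. -/
theorem stmt_13 (n m : ℕ)
    (P : Matrix (Fin n) (Fin n) ℝ) (hP : P.PosDef)
    (pmin : ℝ) (hpmin : IsLeast (Set.range hP.1.eigenvalues) pmin) (hpminpos : 0 < pmin)
    (K : Matrix (Fin m) (Fin n) ℝ)
    (x_v : EuclideanSpace ℝ (Fin n)) (u_v : EuclideanSpace ℝ (Fin m))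
    (xbar σ : ℝ) (hxbar : 0 ≤ xbar) (hσ : 0 ≤ σ)
    (p : ℝ) (hp : p = pmin * xbar ^ 2)
    (blx bux : Fin n → ℝ) (blu buu : Fin m → ℝ)
    (hbx : ∀ k, σ + xbar ≤ bux k - x_v k ∧ σ + xbar ≤ x_v k - blx k)
    (hbu : ∀ l, σ + matOpNorm K * xbar ≤ buu l - u_v l ∧
      σ + matOpNorm K * xbar ≤ u_v l - blu l) :
    ∀ x : EuclideanSpace ℝ (Fin n),
      dotProduct (x - x_v).ofLp (P.mulVec (x - x_v).ofLp) ≤ p →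
      ‖x - x_v‖ ≤ xbar ∧
      (∀ k, blx k + σ ≤ x k ∧ x k ≤ bux k - σ) ∧
      (∀ l, blu l + σ ≤ (u_v - Matrix.toEuclideanLin K (x - x_v)) l ∧
        (u_v - Matrix.toEuclideanLin K (x - x_v)) l ≤ buu l - σ) := by
  intro x hx
  set y : EuclideanSpace ℝ (Fin n) := x - x_v with hy
  have hlow : pmin * ‖y‖ ^ 2 ≤ dotProduct y.ofLp (P.mulVec y.ofLp) :=
    quad_lower P hP pmin (fun i => hpmin.2 ⟨i, rfl⟩) y
  have hnormy : ‖y‖ ≤ xbar := by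
    have h2 : ‖y‖ ^ 2 ≤ xbar ^ 2 :=
      le_of_mul_le_mul_left (hlow.trans (hx.trans_eq hp)) hpminpos
    calc ‖y‖ = Real.sqrt (‖y‖ ^ 2) := (Real.sqrt_sq (norm_nonneg y)).symm
    _ ≤ Real.sqrt (xbar ^ 2) := Real.sqrt_le_sqrt h2
    _ = xbar := Real.sqrt_sq hxbar
  refine ⟨hnormy, ?_, ?_⟩
  · intro k
    have hk := abs_le.mp ((coord_abs_le_norm y k).trans hnormy)
    have hxk : x k = y k + x_v k := by simp [hy]
    constructor
    · have := (hbx k).2; rw [hxk]; linarith [hk.1]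
    · have := (hbx k).1; rw [hxk]; linarith [hk.2]
  · intro l
    set w : EuclideanSpace ℝ (Fin m) := Matrix.toEuclideanLin K y with hw
    have hwn : ‖w‖ ≤ matOpNorm K * xbar := by
      have h1 : ‖w‖ ≤ matOpNorm K * ‖y‖ := by
        have := (LinearMap.toContinuousLinearMap (Matrix.toEuclideanLin K)).le_opNorm y
        simpa [matOpNorm, hw] using this
      exact h1.trans (mul_le_mul_of_nonneg_left hnormy (norm_nonneg _))
    have hl := abs_le.mp ((coord_abs_le_norm w l).trans hwn)
    have hul : (u_v - Matrix.toEuclideanLin K y) l = u_v l - w l := by simp [hw]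
    constructor
    · have := (hbu l).2; rw [hul]; linarith [hl.2]
    · have := (hbu l).1; rw [hul]; linarith [hl.1]
end
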